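/- The derivation ε₂ of Lie[a,b], defined by ε₂(a) = [a,[a,b]] and ε₂(b) = [b,[a,b]], commutes with every derivation ε_{2i} (i ≥ 0), where ε_{2i}(a) = ad(a)^{2i}(b) and ε_{2i}(b) = Σ_{j=0}^{i-1} (-1)^j [ad(a)^j(b), ad(a)^{2i-1-j}(b)]. -/

import Mathlib

/-- The free Lie algebra Lie[a,b] on two generators over ℚ. -/
abbrev L := FreeLieAlgebra ℚ (Fin 2)
/-- The free associative algebra ℚ⟨a,b⟩. -/
abbrev FA := FreeAlgebra ℚ (Fin 2)
/-- The generator a. -/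
noncomputable def la : L := FreeLieAlgebra.of ℚ 0
/-- The generator b. -/
noncomputable def lb : L := FreeLieAlgebra.of ℚ 1
attribute [local instance] LieRing.ofAssociativeRing

/-- The canonical embedding of Lie[a,b] into ℚ⟨a,b⟩ (with commutator bracket). -/
noncomputable def theta : L →ₗ⁅ℚ⁆ FA := FreeLieAlgebra.lift ℚ (FreeAlgebra.ι ℚ)
/-- The coefficient of the word w (a = 0, b = 1) in a noncommutative polynomial. -/
noncomputable def coeffOf (p : FA) (w : List (Fin 2)) : ℚ :=
  FreeAlgebra.equivMonoidAlgebraFreeMonoid (R := ℚ) p |>.coeff (FreeMonoid.ofList w)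

/-- ε_{2i}(a) = ad(a)^{2i}(b). -/
noncomputable def epsA (i : ℕ) : L := ((LieAlgebra.ad ℚ L la) ^ (2 * i)) lb

/-- ε_{2i}(b) = Σ_{j=0}^{i-1} (-1)^j [ad(a)^j(b), ad(a)^{2i-1-j}(b)]. -/
noncomputable def epsB (i : ℕ) : L :=
  ∑ j ∈ Finset.range i, ((-1 : ℚ) ^ j) •
    ⁅((LieAlgebra.ad ℚ L la) ^ j) lb, ((LieAlgebra.ad ℚ L la) ^ (2 * i - 1 - j)) lb⁆

/-! ε₂ is the inner derivation `ad ⁅b, a⁆`, so `⁅ε₂, ε_{2i}⁆ = -ad (ε_{2i} ⁅b, a⁆)`, and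
`ε_{2i}` kills `⁅a, b⁆` because `⁅a, ε_{2i}(b)⁆` telescopes to `⁅b, ad(a)^{2i}(b)⁆`. -/

theorem FreeLieAlgebra.lieSpan_range_of_eq_top (R X : Type*) [CommRing R] :
    LieSubalgebra.lieSpan R (FreeLieAlgebra R X) (Set.range (of R)) = ⊤ := by
  set S := LieSubalgebra.lieSpan R (FreeLieAlgebra R X) (Set.range (of R))
  let g : FreeLieAlgebra R X →ₗ⁅R⁆ S :=
    lift R fun x => ⟨of R x, LieSubalgebra.subset_lieSpan ⟨x, rfl⟩⟩
  have hg : S.incl.comp g = LieHom.id := hom_ext fun x => by simp [g]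
  refine eq_top_iff.2 fun y _ => ?_
  rw [← LieHom.id_apply (R := R) y, ← hg]
  exact (g y).2

theorem FreeLieAlgebra.lieDerivation_ext {R X M : Type*} [CommRing R] [AddCommGroup M]
    [Module R M] [LieRingModule (FreeLieAlgebra R X) M] [LieModule R (FreeLieAlgebra R X) M]
    {D₁ D₂ : LieDerivation R (FreeLieAlgebra R X) M} (h : ∀ x, D₁ (of R x) = D₂ (of R x)) :
    D₁ = D₂ :=
  LieDerivation.ext_of_lieSpan_eq_top (R := R) _ (lieSpan_range_of_eq_top R X) <| by
    rintro _ ⟨x, rfl⟩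
    exact h x

theorem lie_sum_alternating_lie_ad_pow {R L : Type*} [CommRing R] [LieRing L] [LieAlgebra R L]
    (x y : L) (i : ℕ) :
    ⁅x, ∑ j ∈ Finset.range i, ((-1 : R) ^ j) •
      ⁅((LieAlgebra.ad R L x) ^ j) y, ((LieAlgebra.ad R L x) ^ (2 * i - 1 - j)) y⁆⁆ =
    ⁅y, ((LieAlgebra.ad R L x) ^ (2 * i)) y⁆ := by
  set b : ℕ → L := fun k => ((LieAlgebra.ad R L x) ^ k) y
  have hb (k : ℕ) : ⁅x, b k⁆ = b (k + 1) := by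
    simp only [b, pow_succ', Module.End.mul_apply, LieAlgebra.ad_apply]
  have hterm : ∀ j ∈ Finset.range i,
      ⁅x, ((-1 : R) ^ j) • ⁅b j, b (2 * i - 1 - j)⁆⁆ =
        ((-1 : R) ^ j) • ⁅b j, b (2 * i - j)⁆ -
          ((-1 : R) ^ (j + 1)) • ⁅b (j + 1), b (2 * i - (j + 1))⁆ := by
    intro j hj
    rw [Finset.mem_range] at hj
    rw [lie_smul, leibniz_lie, hb, hb, show 2 * i - 1 - j + 1 = 2 * i - j by omega,
      show 2 * i - 1 - j = 2 * i - (j + 1) by omega, pow_succ]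
    module
  rw [lie_sum, Finset.sum_congr rfl hterm, Finset.sum_range_sub',
    show 2 * i - i = i by omega, lie_self, smul_zero, sub_zero, pow_zero, one_smul]
  simp only [b, pow_zero, Module.End.one_apply, Nat.sub_zero]

theorem lie_la_epsB (i : ℕ) : ⁅la, epsB i⁆ = ⁅lb, epsA i⁆ :=
  lie_sum_alternating_lie_ad_pow la lb i

theorem lieDerivation_eq_ad_of_eps_one {D : LieDerivation ℚ L L}
    (ha : D la = epsA 1) (hb : D lb = epsB 1) : D = LieDerivation.ad ℚ L ⁅lb, la⁆ := by
  refine FreeLieAlgebra.lieDerivation_ext fun x => ?_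
  rw [LieDerivation.ad_apply_apply]
  fin_cases x
  · change D la = ⁅⁅lb, la⁆, la⁆
    rw [ha, ← lie_skew, ← lie_skew lb la, lie_neg, neg_neg]
    simp only [epsA, Nat.mul_one, pow_two, Module.End.mul_apply, LieAlgebra.ad_apply]
  · change D lb = ⁅⁅lb, la⁆, lb⁆
    rw [hb, ← lie_skew, ← lie_skew lb la, lie_neg, neg_neg]
    simp [epsB]

theorem lieDerivation_apply_lie_lb_la_of_eps {i : ℕ} {D : LieDerivation ℚ L L}
    (ha : D la = epsA i) (hb : D lb = epsB i) : D ⁅lb, la⁆ = 0 := by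
  rw [LieDerivation.apply_lie_eq_add, ha, hb, ← lie_skew (epsB i), lie_la_epsB, add_neg_cancel]

/-- The derivation ε₂ commutes with every derivation ε_{2i}, i ≥ 0. -/
theorem eps2_commutes_with_eps2i (i : ℕ) (D2 Di : LieDerivation ℚ L L)
    (h2a : D2 la = epsA 1) (h2b : D2 lb = epsB 1)
    (hia : Di la = epsA i) (hib : Di lb = epsB i) :
    ⁅D2, Di⁆ = 0 := by
  rw [lieDerivation_eq_ad_of_eps_one h2a h2b, ← lie_skew, LieDerivation.lie_der_ad_eq_ad_der,
    lieDerivation_apply_lie_lb_la_of_eps hia hib, map_zero, neg_zero]
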